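/- Let n ≥ 2 and ℓ ≥ 2 be integers and M > 0. Set P = 2n² − 5n + 5, let F_n be the nonnegative square root of [ (3n²−12n+16)/4 − n²P/(4(2n²+P)) ] / (n−1)², and set E_n = 2F_n − 1. Then for every r > 0 with r^{n−1} ≥ 2M, one has r² ( V_{2,nℓ}(r) + V_{3,nℓ}(r) ) ≥ (n−1)² [ (E_n² − 1)/4 − 2M F_n² / r^{n−1} ]. -/

import Mathlib

/-!
Put `x = 2M/r^{n-1} ≥ 0` and `λ = (ℓ-1)(n+ℓ) ≥ n+2`. Then `r²V₂` is affine in `x`,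
`r²V₃ = N(n,λ,x)/(2λ + n(n+1)x)²` for an explicit cubic `N`, and the right-hand side is
`(n-1)²F²(1-x) - (n-1)²F`. Since `(n-1)F ≈ √(5/8)·n`, the cruder bound `(n-1)F ≥ 3(n-2)/4` leaves
enough room, and the claim reduces to a polynomial inequality in `(n, λ, x)`. Cleared of
denominators, this is a cubic in `x` whose constant, quadratic and cubic coefficients are
nonnegative and whose quadratic part has nonpositive discriminant, so completing the square
shows that it is nonnegative for `x ≥ 0`.
-/

/-- `D_{nℓ}(r) = n(n+1)M r^{1-n} + (ℓ-1)(n+ℓ)`. -/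
noncomputable def Dnl (n ℓ : ℕ) (M r : ℝ) : ℝ :=
  (n:ℝ)*((n:ℝ)+1)*M / r^(n-1) + ((ℓ:ℝ)-1)*((n:ℝ)+(ℓ:ℝ))

/-- `V_{2,nℓ}(r) = r^{-2}[ (n²-10n+16)/4 - ((3n²-12n+16)/4)(2M/r^{n-1}) ]`. -/
noncomputable def V2nl (n : ℕ) (M r : ℝ) : ℝ :=
  (((n:ℝ)^2 - 10*(n:ℝ) + 16)/4
    - ((3*(n:ℝ)^2 - 12*(n:ℝ) + 16)/4) * (2*M/r^(n-1))) / r^2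

/-- The component `V_{3,nℓ}` of the Zerilli-type potential. -/
noncomputable def V3nl (n ℓ : ℕ) (M r : ℝ) : ℝ :=
  (((ℓ:ℝ)-1)^2*((n:ℝ)+(ℓ:ℝ))^2*(n:ℝ)*((n:ℝ)+2)
    + 4*((ℓ:ℝ)-1)^3*((n:ℝ)+(ℓ:ℝ))^3
    - (6*((ℓ:ℝ)-1)*((n:ℝ)+(ℓ:ℝ))*((n:ℝ)-2)*(n:ℝ)^2*((n:ℝ)+1)*M
        + 6*((ℓ:ℝ)-1)^2*((n:ℝ)+(ℓ:ℝ))^2*((n:ℝ)-4)*(n:ℝ)*M) / r^(n-1)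
    + (4*((ℓ:ℝ)-1)*((n:ℝ)+(ℓ:ℝ))*(n:ℝ)*((n:ℝ)+1)*(2*(n:ℝ)^2-3*(n:ℝ)+4)*M^2
        + ((n:ℝ)-4)*((n:ℝ)-2)*(n:ℝ)^2*((n:ℝ)+1)^2*M^2) / r^(2*n-2)
    + 2*(n:ℝ)^4*((n:ℝ)+1)^2*M^3 / r^(3*n-3))
  / (4*r^2*(Dnl n ℓ M r)^2)

/-- The polynomial `P(n) = 2n² - 5n + 5`. -/
noncomputable def Pn (n : ℕ) : ℝ := 2*(n:ℝ)^2 - 5*(n:ℝ) + 5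

/-- `F_n`: the nonnegative square root of
`[(3n²-12n+16)/4 - n²P(n)/(4(2n²+P(n)))]/(n-1)²`. -/
noncomputable def Fn (n : ℕ) : ℝ :=
  Real.sqrt (((3*(n:ℝ)^2 - 12*(n:ℝ) + 16)/4
    - (n:ℝ)^2*Pn n/(4*(2*(n:ℝ)^2 + Pn n))) / ((n:ℝ)-1)^2)

/-- `E_n = 2F_n - 1`. -/
noncomputable def En (n : ℕ) : ℝ := 2*Fn n - 1


noncomputable def zerilliNumerator (c l x : ℝ) : ℝ :=
  4*l^3 + c*(c+2)*l^2 - (3*l*(c-2)*c^2*(c+1) + 3*l^2*(c-4)*c)*x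
    + (l*c*(c+1)*(2*c^2-3*c+4) + (c-4)*(c-2)*c^2*(c+1)^2/4)*x^2 + c^4*(c+1)^2/4*x^3

/- `(c-1)(6-c)/4 = c(c-1)/2 - (c-1)·3(c-2)/4` is what is left of `r²V₂` and `(n-1)²F` after using
`(n-1)F ≥ 3(n-2)/4`; the gap is cleared of the denominators `4(4c²-5c+5)` and
`(2l + c(c+1)x)²`. -/
noncomputable def zerilliHardyGap (c l x : ℝ) : ℝ :=
  4*(4*c^2-5*c+5) * zerilliNumerator c l x
    - ((c-1)*(6-c)*(4*c^2-5*c+5) - c^2*(2*c^2-5*c+5)*(1-x)) * (2*l + c*(c+1)*x)^2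

def hardyGapCoeff₀ (c l : ℝ) : ℝ :=
  (4*c^2-5*c+5)*(4*l+2*c^2-5*c+6) + c^2*(2*c^2-5*c+5)

def hardyGapCoeff₁ (c l : ℝ) : ℝ :=
  (c+1)*(6*c^4-c^3-24*c^2+35*c-30) + l*(14*c^3-68*c^2+80*c-60)

def hardyGapCoeff₂ (c l : ℝ) : ℝ :=
  4*l*c*(c+1)*(6*c^4-17*c^3+36*c^2-35*c+20) + c^2*(c+1)^2*(10*c^4-67*c^3+136*c^2-135*c+70)

theorem zerilliHardyGap_eq (c l x : ℝ) :
    zerilliHardyGap c l x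
      = 4*l^2*hardyGapCoeff₀ c l - 4*l*c*hardyGapCoeff₁ c l*x + hardyGapCoeff₂ c l*x^2
        + 2*c^6*(c+1)^2*x^3 := by
  unfold zerilliHardyGap zerilliNumerator hardyGapCoeff₀ hardyGapCoeff₁ hardyGapCoeff₂
  ring

theorem hardyGapCoeff₀_pos {c l : ℝ} (hl : 0 ≤ l) : 0 < hardyGapCoeff₀ c l := by
  have hQ : 0 < 4*c^2-5*c+5 := by nlinarith [sq_nonneg (8*c-5)]
  have hL : 0 < 4*l+2*c^2-5*c+6 := by nlinarith [sq_nonneg (4*c-5)]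
  have hP : 0 ≤ c^2*(2*c^2-5*c+5) := mul_nonneg (sq_nonneg c) (by nlinarith [sq_nonneg (4*c-5)])
  unfold hardyGapCoeff₀
  nlinarith [mul_pos hQ hL]

theorem sq_mul_sq_hardyGapCoeff₁_le {c l : ℝ} (hc : 2 ≤ c) (hl : c + 2 ≤ l) :
    c^2 * hardyGapCoeff₁ c l ^ 2 ≤ hardyGapCoeff₀ c l * hardyGapCoeff₂ c l := by
  obtain ⟨m, hm, rfl⟩ : ∃ m, 0 ≤ m ∧ c = m + 2 := ⟨c - 2, by linarith, by ring⟩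
  obtain ⟨b, hb, rfl⟩ : ∃ b, 0 ≤ b ∧ l = m + 4 + b := ⟨l - m - 4, by linarith, by ring⟩
  -- Expanded in `m` and `b`, the difference has a single negative coefficient, `-14932 m⁸`.
  have h : 0 ≤ hardyGapCoeff₀ (m+2) (m+4+b) * hardyGapCoeff₂ (m+2) (m+4+b)
      - (m+2)^2 * hardyGapCoeff₁ (m+2) (m+4+b) ^ 2 - 3733*m^6*(m^2-2)^2 := by
    unfold hardyGapCoeff₀ hardyGapCoeff₁ hardyGapCoeff₂
    ring_nf
    positivity
  nlinarith [show 0 ≤ 3733*m^6*(m^2-2)^2 by positivity]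

theorem zerilliHardyGap_nonneg {c l x : ℝ} (hc : 2 ≤ c) (hl : c + 2 ≤ l) (hx : 0 ≤ x) :
    0 ≤ zerilliHardyGap c l x := by
  set T := hardyGapCoeff₀ c l
  set S := hardyGapCoeff₁ c l
  set A := hardyGapCoeff₂ c l
  have hT : 0 < T := hardyGapCoeff₀_pos (by linarith)
  have hdisc : 0 ≤ T * A - c^2 * S^2 := sub_nonneg.mpr (sq_mul_sq_hardyGapCoeff₁_le hc hl)
  have hsquare : T * (4*l^2*T - 4*l*c*S*x + A*x^2 + 2*c^6*(c+1)^2*x^3)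
      = (2*l*T - c*S*x)^2 + (T*A - c^2*S^2)*x^2 + 2*T*c^6*(c+1)^2*x^3 := by ring
  rw [zerilliHardyGap_eq]
  refine (mul_nonneg_iff_of_pos_left hT).mp (hsquare ▸ ?_)
  positivity

theorem le_zerilliNumerator_div_sq {c l x : ℝ} (hc : 2 ≤ c) (hl : c + 2 ≤ l) (hx : 0 ≤ x) :
    (c-1)*(6-c)/4 - c^2*(2*c^2-5*c+5)/(4*(2*c^2 + (2*c^2-5*c+5)))*(1-x)
      ≤ zerilliNumerator c l x / (2*l + c*(c+1)*x)^2 := by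
  have hQ : 0 < 4*c^2-5*c+5 := by nlinarith
  have hD : 0 < 2*l + c*(c+1)*x := by nlinarith [mul_nonneg (by linarith : 0 ≤ c*(c+1)) hx]
  have hlhs : (c-1)*(6-c)/4 - c^2*(2*c^2-5*c+5)/(4*(2*c^2 + (2*c^2-5*c+5)))*(1-x)
      = ((c-1)*(6-c)*(4*c^2-5*c+5) - c^2*(2*c^2-5*c+5)*(1-x)) / (4*(4*c^2-5*c+5)) := by
    rw [show 2*c^2 + (2*c^2-5*c+5) = 4*c^2-5*c+5 by ring]
    generalize 4*c^2-5*c+5 = Q at hQ ⊢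
    field_simp
  have hgap := zerilliHardyGap_nonneg hc hl hx
  rw [zerilliHardyGap] at hgap
  rw [hlhs, div_le_div_iff₀ (by positivity) (by positivity)]
  linarith

theorem sq_three_mul_sub_two_div_four_le {c : ℝ} (hc : 2 ≤ c) :
    (3*(c-2)/4)^2 ≤ (3*c^2 - 12*c + 16)/4 - c^2*(2*c^2-5*c+5)/(4*(2*c^2 + (2*c^2-5*c+5))) := by
  have hQ : 0 < 2*c^2 + (2*c^2-5*c+5) := by nlinarith
  rw [div_sub_div _ _ (by norm_num) (by positivity), le_div_iff₀ (by positivity)]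
  nlinarith [sq_nonneg (c-2), sq_nonneg (2*(c-2)^2 - 3*(c-2)),
    mul_nonneg (sub_nonneg.2 hc) (sq_nonneg (c-2))]

theorem sub_one_mul_Fn {n : ℕ} (hn : 2 ≤ n) :
    ((n:ℝ)-1) * Fn n = √((3*(n:ℝ)^2 - 12*(n:ℝ) + 16)/4
      - (n:ℝ)^2*Pn n/(4*(2*(n:ℝ)^2 + Pn n))) := by
  have h : (0:ℝ) < (n:ℝ) - 1 := by
    have : (2:ℝ) ≤ n := by exact_mod_cast hn
    linarith
  rw [Fn, Real.sqrt_div' _ (sq_nonneg _), Real.sqrt_sq h.le, mul_div_cancel₀ _ h.ne']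

theorem sub_one_sq_mul_Fn_sq {n : ℕ} (hn : 2 ≤ n) :
    ((n:ℝ)-1)^2 * (Fn n)^2 = (3*(n:ℝ)^2 - 12*(n:ℝ) + 16)/4
      - (n:ℝ)^2*Pn n/(4*(2*(n:ℝ)^2 + Pn n)) := by
  rw [← mul_pow, sub_one_mul_Fn hn, Real.sq_sqrt]
  exact (sq_nonneg _).trans (sq_three_mul_sub_two_div_four_le (by exact_mod_cast hn))

theorem three_mul_sub_two_div_four_le_sub_one_mul_Fn {n : ℕ} (hn : 2 ≤ n) :
    3*((n:ℝ)-2)/4 ≤ ((n:ℝ)-1) * Fn n := by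
  rw [sub_one_mul_Fn hn]
  exact (le_abs_self _).trans
    (Real.abs_le_sqrt (sq_three_mul_sub_two_div_four_le (by exact_mod_cast hn)))

theorem sq_mul_V2nl (n : ℕ) (M : ℝ) {r : ℝ} (hr : r ≠ 0) :
    r^2 * V2nl n M r
      = ((n:ℝ)^2 - 10*(n:ℝ) + 16)/4 - ((3*(n:ℝ)^2 - 12*(n:ℝ) + 16)/4) * (2*M/r^(n-1)) :=
  mul_div_cancel₀ _ (pow_ne_zero 2 hr)

theorem sq_mul_V3nl (n ℓ : ℕ) (M : ℝ) {r : ℝ} (hr : r ≠ 0) :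
    r^2 * V3nl n ℓ M r
      = zerilliNumerator n (((ℓ:ℝ)-1)*((n:ℝ)+(ℓ:ℝ))) (2*M/r^(n-1))
        / (2*(((ℓ:ℝ)-1)*((n:ℝ)+(ℓ:ℝ))) + (n:ℝ)*((n:ℝ)+1)*(2*M/r^(n-1)))^2 := by
  have hs : r^(n-1) ≠ 0 := pow_ne_zero _ hr
  have h2 : r^(2*n-2) = (r^(n-1))^2 := by rw [← pow_mul]; congr 1; omega
  have h3 : r^(3*n-3) = (r^(n-1))^3 := by rw [← pow_mul]; congr 1; omega
  have hD : 4*r^2*(Dnl n ℓ M r)^2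
      = r^2 * (2*(((ℓ:ℝ)-1)*((n:ℝ)+(ℓ:ℝ))) + (n:ℝ)*((n:ℝ)+1)*(2*M/r^(n-1)))^2 := by
    unfold Dnl
    field_simp
    ring
  rw [V3nl, hD, h2, h3, mul_div_assoc', mul_div_mul_left _ _ (pow_ne_zero 2 hr)]
  unfold zerilliNumerator
  field_simp
  ring

theorem zerilli_potential_hardy_lower_bound_general
    (n ℓ : ℕ) (hn : 2 ≤ n) (hl : 2 ≤ ℓ)
    (M r : ℝ) (hM : 0 < M) (hr : 0 < r) :
    r^2 * (V2nl n M r + V3nl n ℓ M r)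
      ≥ ((n:ℝ)-1)^2 * ((En n^2 - 1)/4 - 2*M*(Fn n)^2/r^(n-1)) := by
  have hc : (2:ℝ) ≤ n := by exact_mod_cast hn
  have hlam : (n:ℝ) + 2 ≤ ((ℓ:ℝ)-1)*((n:ℝ)+(ℓ:ℝ)) := by
    have : (2:ℝ) ≤ ℓ := by exact_mod_cast hl
    nlinarith
  have hgap := le_zerilliNumerator_div_sq hc hlam (by positivity : 0 ≤ 2*M/r^(n-1))
  have hF := mul_le_mul_of_nonneg_left (three_mul_sub_two_div_four_le_sub_one_mul_Fn hn)
    (by linarith : (0:ℝ) ≤ (n:ℝ)-1)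
  have hF2 := sub_one_sq_mul_Fn_sq hn
  rw [Pn] at hF2
  have hRHS : ((n:ℝ)-1)^2 * ((En n^2 - 1)/4 - 2*M*(Fn n)^2/r^(n-1))
      = ((n:ℝ)-1)^2 * (Fn n)^2 * (1 - 2*M/r^(n-1)) - ((n:ℝ)-1) * (((n:ℝ)-1) * Fn n) := by
    rw [En]; ring
  rw [ge_iff_le, hRHS, hF2, mul_add (r^2), sq_mul_V2nl _ _ hr.ne', sq_mul_V3nl _ _ _ hr.ne']
  linarith

/-- **Pointwise lower bound for the Zerilli-type potential by the Hardy potential.**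
For `n ≥ 2`, `ℓ ≥ 2`, `M > 0` and `r > 0` with `r^{n-1} ≥ 2M`,
`r²(V_{2,nℓ}(r) + V_{3,nℓ}(r)) ≥ (n-1)²[(E_n²-1)/4 - 2MF_n²/r^{n-1}]`. -/
theorem zerilli_potential_hardy_lower_bound
    (n ℓ : ℕ) (hn : 2 ≤ n) (hl : 2 ≤ ℓ)
    (M r : ℝ) (hM : 0 < M) (hr : 0 < r) (hrM : 2*M ≤ r^(n-1)) :
    r^2 * (V2nl n M r + V3nl n ℓ M r)
      ≥ ((n:ℝ)-1)^2 * ((En n^2 - 1)/4 - 2*M*(Fn n)^2/r^(n-1)) :=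
  zerilli_potential_hardy_lower_bound_general n ℓ hn hl M r hM hr
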